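/- Let G be a finite set of C¹ diffeomorphisms of ℝ, closed under taking inverses, with every g ∈ G having everywhere positive derivative, and assume there is a constant C₀ ≥ 1 with 1/C₀ ≤ g'(y) ≤ C₀ for every g ∈ G and every y ∈ ℝ. Let a > 0, let 0 < ε₁ < min{1, a/100}, and let δ₀ with 0 < δ₀ ≤ ε₁ be a logarithmic modulus of continuity for G with respect to ε₁. Suppose x ∈ ℝ satisfies λ_*(x) > a and that the orbit { w(x) : w a word in G } is a bounded subset of ℝ. Then for every 0 < δ₁ < δ₀/8 and every 0 < μ < 1 there exist words φ and ψ in G and points u, v ∈ ℝ with v = ψ(u), such that: (1) (φ∘ψ)(u) = u; (2) (φ∘ψ)'(z) < μ for every z ∈ [u − δ₀/8, u + δ₀/8]; (3) (ψ∘φ)(v) = v; (4) ψ([u − δ₀/8, u + δ₀/8]) ⊆ [x − δ₁, x + δ₁]; (5) |x − v| < δ₁. -/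

import Mathlib

open MeasureTheory Filter Topology

/-- Composition of a list of maps: the list `[g_k, …, g₁]` composes to `g_k ∘ ⋯ ∘ g₁`
(the empty list gives the identity map). -/
def wordComp (w : List (ℝ → ℝ)) : ℝ → ℝ := w.foldr (· ∘ ·) id

/-- A word in `G` is a finite list of elements of `G`. -/
def IsWord (G : Finset (ℝ → ℝ)) (w : List (ℝ → ℝ)) : Prop := ∀ g ∈ w, g ∈ G

/-- The maximal `n`-expansion `μ_n(x)`. -/
noncomputable def maxExp (G : Finset (ℝ → ℝ)) (n : ℕ) (x : ℝ) : ℝ :=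
  sSup {d : ℝ | ∃ w : List (ℝ → ℝ), IsWord G w ∧ w.length ≤ n ∧ d = deriv (wordComp w) x}

/-- The transverse expansion exponent `λ_*(x) = limsup_n log(μ_n(x))/n`, in `[0,∞]`. -/
noncomputable def expExponent (G : Finset (ℝ → ℝ)) (x : ℝ) : ENNReal :=
  Filter.limsup (fun n : ℕ => ENNReal.ofReal (Real.log (maxExp G n x) / n)) Filter.atTop

/-- `δ₀` is a logarithmic modulus of continuity for `G` with respect to `ε₁`. -/
def LogModulus (G : Finset (ℝ → ℝ)) (ε₁ δ₀ : ℝ) : Prop :=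
  ∀ g ∈ G, ∀ y z : ℝ, |y - z| ≤ δ₀ → |Real.log (deriv g y) - Real.log (deriv g z)| ≤ ε₁

/-!
Since `λ_*(x) > a`, for infinitely many `n` some word `w` of length at most `n` has
`w'(x) > exp (a * n)`. By Pliss' lemma a suffix `W` of `w` is a hyperbolic time at rate `ε₁`, and
then the inverse word of `W` maps the `δ₀ / 4`-ball around `W x` into a tiny neighbourhood of `x`,
with derivative at most `exp (-(a - ε₁) * n)`: all intermediate points stay `δ₀`-close to the
orbit, where the logarithmic modulus controls the distortion of each letter. The points `W x` lie
in the bounded orbit, so a single such word `φ` brings `x` close to the centres of arbitrarily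
strongly contracting branches `ψ`. The return map `φ ∘ ψ` then sends the `δ₀ / 4`-ball into the
concentric `δ₀ / 8`-ball with derivative `< μ`, and the intermediate value theorem gives the fixed
point.
-/

open Function Metric Real Set

variable {G : Finset (ℝ → ℝ)}

lemma wordComp_cons (g : ℝ → ℝ) (w : List (ℝ → ℝ)) : wordComp (g :: w) = g ∘ wordComp w := rfl

lemma wordComp_append (w₁ w₂ : List (ℝ → ℝ)) :
    wordComp (w₁ ++ w₂) = wordComp w₁ ∘ wordComp w₂ := by
  induction w₁ with
  | nil => rfl
  | cons g w ih => rw [List.cons_append, wordComp_cons, wordComp_cons, ih, comp_assoc]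

lemma isWord_nil : IsWord G [] := fun _ h => absurd h List.not_mem_nil

lemma isWord_cons {g : ℝ → ℝ} {w : List (ℝ → ℝ)} : IsWord G (g :: w) ↔ g ∈ G ∧ IsWord G w :=
  List.forall_mem_cons

lemma isWord_append {w₁ w₂ : List (ℝ → ℝ)} : IsWord G (w₁ ++ w₂) ↔ IsWord G w₁ ∧ IsWord G w₂ :=
  List.forall_mem_append

lemma IsWord.of_suffix {v w : List (ℝ → ℝ)} (hw : IsWord G w) (hvw : v <:+ w) : IsWord G v :=
  fun g hg => hw g (hvw.subset hg)

lemma contDiff_wordComp (hC1 : ∀ g ∈ G, ContDiff ℝ 1 g) {w : List (ℝ → ℝ)} (hw : IsWord G w) :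
    ContDiff ℝ 1 (wordComp w) := by
  induction w with
  | nil => exact contDiff_id
  | cons g w ih =>
    rw [isWord_cons] at hw
    exact (hC1 g hw.1).comp (ih hw.2)

lemma differentiable_wordComp (hC1 : ∀ g ∈ G, ContDiff ℝ 1 g) {w : List (ℝ → ℝ)}
    (hw : IsWord G w) : Differentiable ℝ (wordComp w) :=
  (contDiff_wordComp hC1 hw).differentiable one_ne_zero

lemma deriv_wordComp_append (hC1 : ∀ g ∈ G, ContDiff ℝ 1 g) {u v : List (ℝ → ℝ)}
    (hu : IsWord G u) (hv : IsWord G v) (y : ℝ) :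
    deriv (wordComp (u ++ v)) y = deriv (wordComp u) (wordComp v y) * deriv (wordComp v) y := by
  rw [wordComp_append]
  exact deriv_comp y (differentiable_wordComp hC1 hu _) (differentiable_wordComp hC1 hv _)

lemma deriv_wordComp_pos (hC1 : ∀ g ∈ G, ContDiff ℝ 1 g) (hpos : ∀ g ∈ G, ∀ y, 0 < deriv g y)
    {w : List (ℝ → ℝ)} (hw : IsWord G w) (y : ℝ) : 0 < deriv (wordComp w) y := by
  induction w with
  | nil => simp [wordComp]
  | cons g w ih =>
    have hgw : IsWord G ([g] ++ w) := hw
    rw [isWord_append] at hgw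
    rw [← List.singleton_append, deriv_wordComp_append hC1 hgw.1 hgw.2]
    exact mul_pos (hpos g (isWord_cons.1 hw).1 _) (ih hgw.2)

lemma deriv_apply_eq_inv_of_leftInverse {g h : ℝ → ℝ} (hg : Differentiable ℝ g)
    (hh : Differentiable ℝ h) (hhg : LeftInverse h g) (t : ℝ) :
    deriv h (g t) = (deriv g t)⁻¹ := by
  have hchain : deriv (h ∘ g) t = deriv h (g t) * deriv g t := deriv_comp t (hh _) (hg _)
  rw [show h ∘ g = id from funext hhg, deriv_id] at hchain
  exact eq_inv_of_mul_eq_one_left hchain.symm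

lemma LogModulus.deriv_le {ε δ : ℝ} (hmod : LogModulus G ε δ)
    (hpos : ∀ g ∈ G, ∀ y, 0 < deriv g y) {g : ℝ → ℝ} (hg : g ∈ G) {y z : ℝ} (hyz : |y - z| ≤ δ) :
    deriv g y ≤ exp ε * deriv g z := by
  have hlog := (abs_le.1 (hmod g hg y z hyz)).2
  calc deriv g y = exp (log (deriv g y)) := (exp_log (hpos g hg y)).symm
    _ ≤ exp (ε + log (deriv g z)) := exp_le_exp.2 (by linarith)
    _ = exp ε * deriv g z := by rw [exp_add, exp_log (hpos g hg z)]

lemma LogModulus.deriv_le_of_leftInverse {ε δ : ℝ} (hmod : LogModulus G ε δ)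
    (hC1 : ∀ g ∈ G, ContDiff ℝ 1 g) (hpos : ∀ g ∈ G, ∀ y, 0 < deriv g y) {g h : ℝ → ℝ}
    (hg : g ∈ G) (hh : h ∈ G) (hhg : LeftInverse h g) {q y : ℝ} (hq : dist q (g y) ≤ δ) :
    deriv h q ≤ exp ε / deriv g y := by
  rw [div_eq_mul_inv, ← deriv_apply_eq_inv_of_leftInverse ((hC1 g hg).differentiable one_ne_zero)
    ((hC1 h hh).differentiable one_ne_zero) hhg]
  exact hmod.deriv_le hpos hh hq

/-- Hyperbolic times in the sense of Pliss; `U` is the part of `W` applied last. -/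
def IsHyperbolicTime (c : ℝ) (W : List (ℝ → ℝ)) (x : ℝ) : Prop :=
  ∀ U V, U ++ V = W → exp (c * U.length) ≤ deriv (wordComp U) (wordComp V x)

lemma IsHyperbolicTime.exp_le_deriv {c x : ℝ} {W : List (ℝ → ℝ)} (hW : IsHyperbolicTime c W x) :
    exp (c * W.length) ≤ deriv (wordComp W) x :=
  hW W [] W.append_nil

lemma IsHyperbolicTime.of_append {c x : ℝ} {W V : List (ℝ → ℝ)}
    (hWV : IsHyperbolicTime c (W ++ V) x) : IsHyperbolicTime c W (wordComp V x) := by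
  intro U V' hUV'
  have h := hWV U (V' ++ V) (by rw [← List.append_assoc, hUV'])
  rwa [wordComp_append] at h

/-- Pliss' lemma: a suffix minimising `exp (c * W.length) / deriv (wordComp W) x` is a
hyperbolic time. -/
theorem exists_suffix_isHyperbolicTime (hC1 : ∀ g ∈ G, ContDiff ℝ 1 g)
    (hpos : ∀ g ∈ G, ∀ y, 0 < deriv g y) {w : List (ℝ → ℝ)} (hw : IsWord G w) (c x : ℝ) :
    ∃ W, W <:+ w ∧ IsHyperbolicTime c W x ∧
      exp (c * W.length) / deriv (wordComp W) x ≤ exp (c * w.length) / deriv (wordComp w) x := by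
  set B : List (ℝ → ℝ) → ℝ := fun V => exp (c * V.length) / deriv (wordComp V) x
  have hfin : {V | V <:+ w}.Finite := by simpa using w.tails.finite_toSet
  obtain ⟨W, hWw, hmin⟩ := exists_min_image _ B hfin ⟨w, w.suffix_refl⟩
  refine ⟨W, hWw, fun U V hUV => ?_, hmin w w.suffix_refl⟩
  have hUV_word : IsWord G U ∧ IsWord G V := isWord_append.1 (hUV ▸ hw.of_suffix hWw)
  have hVw : V <:+ w := (hUV ▸ List.suffix_append U V).trans hWw
  have hU_pos := deriv_wordComp_pos hC1 hpos hUV_word.1 (wordComp V x)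
  have hBV : 0 < B V := div_pos (exp_pos _) (deriv_wordComp_pos hC1 hpos hUV_word.2 x)
  have hsplit : B W = exp (c * U.length) / deriv (wordComp U) (wordComp V x) * B V := by
    subst hUV
    simp only [B, List.length_append, Nat.cast_add, mul_add, exp_add,
      deriv_wordComp_append hC1 hUV_word.1 hUV_word.2]
    field_simp
  have hle : exp (c * U.length) / deriv (wordComp U) (wordComp V x) * B V ≤ 1 * B V := by
    rw [← hsplit, one_mul]
    exact hmin V hVw
  rw [← div_le_one hU_pos]
  exact le_of_mul_le_mul_right hle hBV

lemma LogModulus.contracting_cons {c δ : ℝ} (hmod : LogModulus G c δ)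
    (hC1 : ∀ g ∈ G, ContDiff ℝ 1 g) (hpos : ∀ g ∈ G, ∀ y, 0 < deriv g y) {g h : ℝ → ℝ}
    (hg : g ∈ G) (hh : h ∈ G) (hhg : LeftInverse h g) {V : List (ℝ → ℝ)} (hV : IsWord G V)
    {x p ρ B : ℝ} (hρB : ρ * B ≤ δ)
    (hVbound : ∀ z ∈ closedBall p ρ, deriv (wordComp V) z ≤ B ∧ dist (wordComp V z) (g x) ≤ ρ * B)
    {z : ℝ} (hz : z ∈ closedBall p ρ) :
    deriv (wordComp (h :: V)) z ≤ exp c / deriv g x * B ∧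
      dist (wordComp (h :: V) z) x ≤ ρ * (exp c / deriv g x * B) := by
  set K := exp c / deriv g x
  have hK₀ : 0 ≤ K := (div_pos (exp_pos c) (hpos g hg x)).le
  have hK : ∀ q ∈ closedBall (g x) (ρ * B), ‖deriv h q‖ ≤ K := fun q hq => by
    rw [norm_of_nonneg (hpos h hh q).le]
    exact hmod.deriv_le_of_leftInverse hC1 hpos hg hh hhg (hq.trans hρB)
  have hh_diff : Differentiable ℝ h := (hC1 h hh).differentiable one_ne_zero
  obtain ⟨hVz, hdist⟩ := hVbound z hz
  rw [wordComp_cons]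
  constructor
  · rw [deriv_comp z (hh_diff _) (differentiable_wordComp hC1 hV _)]
    exact mul_le_mul ((le_abs_self _).trans (hK _ hdist)) hVz
      (deriv_wordComp_pos hC1 hpos hV z).le hK₀
  · have hmvt := (convex_closedBall (g x) (ρ * B)).norm_image_sub_le_of_norm_deriv_le
      (fun q _ => hh_diff q) hK (mem_closedBall_self (dist_nonneg.trans hdist)) hdist
    rw [← dist_eq_norm, ← dist_eq_norm, hhg] at hmvt
    calc dist (h (wordComp V z)) x ≤ K * dist (wordComp V z) (g x) := hmvt
      _ ≤ K * (ρ * B) := mul_le_mul_of_nonneg_left hdist hK₀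
      _ = ρ * (K * B) := by ring

/-- `V` is the inverse word of `W`. Hyperbolicity keeps every intermediate point within `δ` of
the orbit of `x`, where the modulus of continuity bounds the distortion of each inverse letter. -/
theorem IsHyperbolicTime.exists_contracting_word (hC1 : ∀ g ∈ G, ContDiff ℝ 1 g)
    (hpos : ∀ g ∈ G, ∀ y, 0 < deriv g y) (hinv : ∀ g ∈ G, ∃ h ∈ G, LeftInverse h g)
    {c δ ρ : ℝ} (hmod : LogModulus G c δ) (hρδ : ρ ≤ δ) {W : List (ℝ → ℝ)} (hW : IsWord G W)
    {x : ℝ} (hyp : IsHyperbolicTime c W x) :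
    ∃ V, IsWord G V ∧ ∀ z ∈ closedBall (wordComp W x) ρ,
      deriv (wordComp V) z ≤ exp (c * W.length) / deriv (wordComp W) x ∧
      dist (wordComp V z) x ≤ ρ * (exp (c * W.length) / deriv (wordComp W) x) := by
  induction W using List.reverseRecOn generalizing x with
  | nil =>
    refine ⟨[], isWord_nil, fun z hz => ?_⟩
    simpa [wordComp] using hz
  | append_singleton W g ih =>
    obtain ⟨hW, hgw⟩ := isWord_append.1 hW
    have hg : g ∈ G := hgw g (List.mem_singleton_self g)
    have hg₁ : wordComp [g] = g := rfl
    obtain ⟨h, hh, hhg⟩ := hinv g hg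
    obtain ⟨V, hV, hVbound⟩ := ih hW hyp.of_append
    rw [hg₁] at hVbound
    set B := exp (c * W.length) / deriv (wordComp W) (g x)
    have hB1 : B ≤ 1 :=
      (div_le_one (deriv_wordComp_pos hC1 hpos hW _)).2 (hg₁ ▸ hyp.of_append.exp_le_deriv)
    have hKB : exp (c * (W ++ [g]).length) / deriv (wordComp (W ++ [g])) x =
        exp c / deriv g x * B := by
      rw [deriv_wordComp_append hC1 hW hgw, hg₁, List.length_append, List.length_singleton,
        Nat.cast_add, Nat.cast_one, mul_add_one, exp_add]
      ring
    refine ⟨h :: V, isWord_cons.2 ⟨hh, hV⟩, fun z hz => ?_⟩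
    rw [wordComp_append, comp_apply, hg₁] at hz
    rw [hKB]
    exact hmod.contracting_cons hC1 hpos hg hh hhg hV
      (by nlinarith [nonneg_of_mem_closedBall hz]) hVbound hz

lemma frequently_exists_word_exp_lt_deriv {a x : ℝ} (hx : ENNReal.ofReal a < expExponent G x) :
    ∃ᶠ n : ℕ in atTop, ∃ w, IsWord G w ∧ w.length ≤ n ∧ exp (a * n) < deriv (wordComp w) x := by
  refine (frequently_lt_of_lt_limsup (by isBoundedDefault) hx).mono fun n hn => ?_
  obtain ⟨hlt, hquot⟩ := ENNReal.ofReal_lt_ofReal_iff'.1 hn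
  have hn0 : (0 : ℝ) < n := Nat.cast_pos.2 (Nat.pos_of_ne_zero (by rintro rfl; simp at hquot))
  have hlog : a * n < log (maxExp G n x) := (lt_div_iff₀ hn0).1 hlt
  by_contra! hle
  set S := {d : ℝ | ∃ w, IsWord G w ∧ w.length ≤ n ∧ d = deriv (wordComp w) x}
  have hS : ∀ d ∈ S, d ≤ exp (a * n) := by
    rintro _ ⟨w, hw, hlen, rfl⟩
    exact hle w hw hlen
  have hid : (1 : ℝ) ∈ S := ⟨[], isWord_nil, Nat.zero_le n, by simp [wordComp]⟩
  have hmax : maxExp G n x ≤ exp (a * n) := csSup_le ⟨1, hid⟩ hS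
  have hmax_pos : 0 < maxExp G n x := one_pos.trans_le (le_csSup ⟨_, hS⟩ hid)
  linarith [log_le_log hmax_pos hmax, log_exp (a * n)]

theorem exists_contracting_branch (hC1 : ∀ g ∈ G, ContDiff ℝ 1 g)
    (hpos : ∀ g ∈ G, ∀ y, 0 < deriv g y) (hinv : ∀ g ∈ G, ∃ h ∈ G, LeftInverse h g)
    {a c δ ρ x : ℝ} (hc : 0 ≤ c) (hca : c < a) (hmod : LogModulus G c δ) (hρδ : ρ ≤ δ)
    (hx : ENNReal.ofReal a < expExponent G x) {ε : ℝ} (hε : 0 < ε) :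
    ∃ φ ψ : List (ℝ → ℝ), IsWord G φ ∧ IsWord G ψ ∧ ∀ z ∈ closedBall (wordComp φ x) ρ,
      deriv (wordComp ψ) z ≤ ε ∧ dist (wordComp ψ z) x ≤ ρ * ε := by
  have hsmall : ∀ᶠ n : ℕ in atTop, exp (-((a - c) * n)) < ε :=
    (tendsto_exp_neg_atTop_nhds_zero.comp
      (tendsto_natCast_atTop_atTop.const_mul_atTop (sub_pos.2 hca))).eventually_lt_const hε
  obtain ⟨n, ⟨w, hw, hlen, hexp⟩, hn⟩ :=
    ((frequently_exists_word_exp_lt_deriv hx).and_eventually hsmall).exists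
  obtain ⟨W, hWw, hyp, hWB⟩ := exists_suffix_isHyperbolicTime hC1 hpos hw c x
  have hW := hw.of_suffix hWw
  obtain ⟨V, hV, hcontr⟩ := hyp.exists_contracting_word hC1 hpos hinv hmod hρδ hW
  have hBε : exp (c * W.length) / deriv (wordComp W) x ≤ ε :=
    calc _ ≤ exp (c * w.length) / deriv (wordComp w) x := hWB
      _ ≤ exp (c * n) / exp (a * n) :=
        div_le_div₀ (exp_pos _).le (exp_le_exp.2 (by gcongr)) (exp_pos _) hexp.le
      _ = exp (-((a - c) * n)) := by rw [← exp_sub]; ring_nf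
      _ ≤ ε := hn.le
  refine ⟨W, V, hW, hV, fun z hz => ⟨(hcontr z hz).1.trans hBε, (hcontr z hz).2.trans ?_⟩⟩
  exact mul_le_mul_of_nonneg_left hBε (nonneg_of_mem_closedBall hz)

lemma Bornology.IsBounded.exists_frequently_dist_lt {X : Type*} [PseudoMetricSpace X]
    [ProperSpace X] {s : Set X} (hs : Bornology.IsBounded s) {p : ℕ → X} (hp : ∀ n, p n ∈ s)
    {r : ℝ} (hr : 0 < r) : ∃ i, ∃ᶠ j in atTop, dist (p j) (p i) < r := by
  obtain ⟨c, -, σ, hσ, hlim⟩ := tendsto_subseq_of_bounded hs hp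
  obtain ⟨N, hN⟩ := eventually_atTop.1 ((Metric.tendsto_nhds.1 hlim) _ (half_pos hr))
  refine ⟨σ N, hσ.tendsto_atTop.frequently
    (frequently_atTop.2 fun k => ⟨max k N, le_max_left _ _, ?_⟩)⟩
  calc dist (p (σ (max k N))) (p (σ N)) ≤ dist (p (σ (max k N))) c + dist (p (σ N)) c :=
        dist_triangle_right _ _ _
    _ < r / 2 + r / 2 := add_lt_add (hN _ (le_max_right _ _)) (hN N le_rfl)
    _ = r := add_halves r

/-- The points `φₙ x` at which the branches contracting by `1 / (n + 1)` start lie in the bounded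
orbit of `x`, so one of them is approached within `ξ` infinitely often. -/
theorem exists_word_near_contracting_branches (hC1 : ∀ g ∈ G, ContDiff ℝ 1 g)
    (hpos : ∀ g ∈ G, ∀ y, 0 < deriv g y) (hinv : ∀ g ∈ G, ∃ h ∈ G, LeftInverse h g)
    {a c δ ρ x : ℝ} (hc : 0 ≤ c) (hca : c < a) (hmod : LogModulus G c δ) (hρδ : ρ ≤ δ)
    (hx : ENNReal.ofReal a < expExponent G x)
    (hbdd : Bornology.IsBounded {y : ℝ | ∃ w : List (ℝ → ℝ), IsWord G w ∧ y = wordComp w x})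
    {ξ : ℝ} (hξ : 0 < ξ) :
    ∃ φ, IsWord G φ ∧ ∀ ε > 0, ∀ η > 0, ∃ ψ q, IsWord G ψ ∧ dist q (wordComp φ x) < ξ ∧
      ∀ z ∈ closedBall q ρ, deriv (wordComp ψ) z ≤ ε ∧ dist (wordComp ψ z) x < η := by
  choose φ ψ hφ hψ hcontr using fun n : ℕ =>
    exists_contracting_branch hC1 hpos hinv hc hca hmod hρδ hx (Nat.one_div_pos_of_nat (n := n))
  obtain ⟨i, hi⟩ := hbdd.exists_frequently_dist_lt (fun n => ⟨φ n, hφ n, rfl⟩) hξ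
  refine ⟨φ i, hφ i, fun ε hε η hη => ?_⟩
  have hlim : Tendsto (fun n : ℕ => 1 / ((n : ℝ) + 1)) atTop (𝓝 0) :=
    tendsto_one_div_add_atTop_nhds_zero_nat
  obtain ⟨j, hij, hjε, hjη⟩ := (hi.and_eventually ((hlim.eventually_lt_const hε).and
    ((hlim.const_mul ρ).eventually_lt_const (by rwa [mul_zero])))).exists
  exact ⟨ψ j, _, hψ j, hij, fun z hz =>
    ⟨(hcontr j z hz).1.trans hjε.le, (hcontr j z hz).2.trans_lt hjη⟩⟩

lemma exists_isFixedPt_mem_closedBall {R : ℝ → ℝ} {q ρ s : ℝ} (hR : ContinuousOn R (closedBall q ρ))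
    (hs₀ : 0 ≤ s) (hsρ : s ≤ ρ) (hmaps : MapsTo R (closedBall q ρ) (closedBall q s)) :
    ∃ u ∈ closedBall q s, IsFixedPt R u := by
  rw [Real.closedBall_eq_Icc] at hR
  obtain ⟨u, hu, hfix⟩ := exists_mem_Icc_isFixedPt_of_mapsTo hR (by linarith)
    (by simpa only [Real.closedBall_eq_Icc] using
      hmaps.mono_right (closedBall_subset_closedBall hsρ))
  exact ⟨u, hfix ▸ hmaps (Real.closedBall_eq_Icc ▸ hu), hfix⟩

lemma exists_isFixedPt_comp_deriv_lt {f ψ : ℝ → ℝ} (hf : Differentiable ℝ f)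
    (hf' : ∀ y, 0 ≤ deriv f y) (hψ : Differentiable ℝ ψ) {U S : Set ℝ} {q r Λ μ : ℝ}
    (hr : 0 ≤ r) (hΛ : 0 < Λ) (hμ : 0 < μ)
    (hf_U : ∀ y ∈ U, deriv f y < Λ ∧ dist (f y) q ≤ r ∧ y ∈ S)
    (hψ_U : ∀ z ∈ closedBall q (2 * r), deriv ψ z ≤ μ / Λ ∧ ψ z ∈ U) :
    ∃ u, f (ψ u) = u ∧ (∀ z ∈ closedBall u r, deriv (f ∘ ψ) z < μ) ∧
      MapsTo ψ (closedBall u r) S := by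
  obtain ⟨u, hu, hfix⟩ := exists_isFixedPt_mem_closedBall
    (hf.continuous.comp hψ.continuous).continuousOn hr (by linarith)
    (fun z hz => (hf_U _ (hψ_U z hz).2).2.1)
  have hball : closedBall u r ⊆ closedBall q (2 * r) :=
    closedBall_subset_closedBall' (by linarith [mem_closedBall.1 hu])
  refine ⟨u, hfix, fun z hz => ?_, fun z hz => (hf_U _ (hψ_U z (hball hz)).2).2.2⟩
  obtain ⟨hψz, hψzU⟩ := hψ_U z (hball hz)
  rw [deriv_comp z (hf _) (hψ _)]
  calc deriv f (ψ z) * deriv ψ z ≤ deriv f (ψ z) * (μ / Λ) :=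
        mul_le_mul_of_nonneg_left hψz (hf' _)
    _ < Λ * (μ / Λ) := mul_lt_mul_of_pos_right (hf_U _ hψzU).1 (div_pos hμ hΛ)
    _ = μ := mul_div_cancel₀ μ hΛ.ne'

theorem hyperbolic_fixed_point_near_expansive_point_general
    (G : Finset (ℝ → ℝ))
    (hC1 : ∀ g ∈ G, ContDiff ℝ 1 g)
    (hpos : ∀ g ∈ G, ∀ y : ℝ, 0 < deriv g y)
    (hinv : ∀ g ∈ G, ∃ h ∈ G, (∀ x : ℝ, h (g x) = x) ∧ (∀ x : ℝ, g (h x) = x))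
    (a ε₁ δ₀ : ℝ) (hε₁ : 0 < ε₁) (hε₁a : ε₁ < min 1 (a / 100))
    (hδ₀pos : 0 < δ₀) (hmod : LogModulus G ε₁ δ₀)
    (x : ℝ) (hx : ENNReal.ofReal a < expExponent G x)
    (hbdd : Bornology.IsBounded
      {y : ℝ | ∃ w : List (ℝ → ℝ), IsWord G w ∧ y = wordComp w x}) :
    ∀ δ₁ μ : ℝ, 0 < δ₁ → δ₁ < δ₀ / 8 → 0 < μ → μ < 1 →
      ∃ (φ ψ : List (ℝ → ℝ)) (u v : ℝ), IsWord G φ ∧ IsWord G ψ ∧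
        v = wordComp ψ u ∧
        wordComp φ (wordComp ψ u) = u ∧
        (∀ z ∈ Set.Icc (u - δ₀ / 8) (u + δ₀ / 8),
          deriv (wordComp φ ∘ wordComp ψ) z < μ) ∧
        wordComp ψ (wordComp φ v) = v ∧
        wordComp ψ '' Set.Icc (u - δ₀ / 8) (u + δ₀ / 8) ⊆ Set.Icc (x - δ₁) (x + δ₁) ∧
        |x - v| < δ₁ := by
  intro δ₁ μ hδ₁ _ hμ _
  simp only [← Real.closedBall_eq_Icc, abs_sub_comm x, ← Real.dist_eq]
  obtain ⟨φ, hφ, hbranches⟩ := exists_word_near_contracting_branches hC1 hpos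
    (fun g hg => (hinv g hg).imp fun _ hh => ⟨hh.1, hh.2.1⟩) hε₁.le
    (by linarith [min_le_right 1 (a / 100)]) hmod (ρ := 2 * (δ₀ / 8)) (by linarith) hx hbdd
    (ξ := δ₀ / 16) (by positivity)
  set f := wordComp φ
  have hf : ContDiff ℝ 1 f := contDiff_wordComp hC1 hφ
  set Λ := deriv f x + 1
  have hΛ : 0 < Λ := by linarith [deriv_wordComp_pos hC1 hpos hφ x]
  obtain ⟨τ, hτ, hnear⟩ : ∃ τ > 0, ∀ y, dist y x < τ →
      deriv f y < Λ ∧ dist (f y) (f x) < δ₀ / 16 ∧ dist y x < δ₁ :=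
    Metric.eventually_nhds_iff.1 (((hf.continuous_deriv le_rfl).continuousAt.eventually_lt
      continuousAt_const (lt_add_one _)).and
      ((hf.continuous.continuousAt.eventually (ball_mem_nhds _ (by positivity))).and
        (ball_mem_nhds x hδ₁)))
  obtain ⟨ψ, q, hψ, hq, hcontr⟩ := hbranches (μ / Λ) (div_pos hμ hΛ) τ hτ
  have hf_near : ∀ y ∈ ball x τ, deriv f y < Λ ∧ dist (f y) q ≤ δ₀ / 8 ∧ y ∈ ball x δ₁ :=
    fun y hy => by
      obtain ⟨hfy, hdist, hy₁⟩ := hnear y hy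
      exact ⟨hfy, by linarith [dist_triangle_right (f y) q (f x)], hy₁⟩
  obtain ⟨u, hfix, hderiv, hmaps⟩ := exists_isFixedPt_comp_deriv_lt
    (hf.differentiable one_ne_zero) (fun y => (deriv_wordComp_pos hC1 hpos hφ y).le)
    (differentiable_wordComp hC1 hψ) (by positivity) hΛ hμ hf_near hcontr
  exact ⟨φ, ψ, u, _, hφ, hψ, rfl, hfix, hderiv, congrArg (wordComp ψ) hfix,
    hmaps.image_subset.trans ball_subset_closedBall, hmaps (mem_closedBall_self (by positivity))⟩

/-- Existence of hyperbolic fixed points for the pseudogroup near a point of the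
hyperbolic set, with uniform estimates on the domains of contraction. -/
theorem hyperbolic_fixed_point_near_expansive_point
    (G : Finset (ℝ → ℝ))
    (hC1 : ∀ g ∈ G, ContDiff ℝ 1 g)
    (hpos : ∀ g ∈ G, ∀ y : ℝ, 0 < deriv g y)
    (hinv : ∀ g ∈ G, ∃ h ∈ G, (∀ x : ℝ, h (g x) = x) ∧ (∀ x : ℝ, g (h x) = x))
    (C₀ : ℝ) (hC₀ : 1 ≤ C₀)
    (hbound : ∀ g ∈ G, ∀ y : ℝ, 1 / C₀ ≤ deriv g y ∧ deriv g y ≤ C₀)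
    (a ε₁ δ₀ : ℝ) (ha : 0 < a) (hε₁ : 0 < ε₁) (hε₁a : ε₁ < min 1 (a / 100))
    (hδ₀pos : 0 < δ₀) (hδ₀ε₁ : δ₀ ≤ ε₁) (hmod : LogModulus G ε₁ δ₀)
    (x : ℝ) (hx : ENNReal.ofReal a < expExponent G x)
    (hbdd : Bornology.IsBounded
      {y : ℝ | ∃ w : List (ℝ → ℝ), IsWord G w ∧ y = wordComp w x}) :
    ∀ δ₁ μ : ℝ, 0 < δ₁ → δ₁ < δ₀ / 8 → 0 < μ → μ < 1 →
      ∃ (φ ψ : List (ℝ → ℝ)) (u v : ℝ), IsWord G φ ∧ IsWord G ψ ∧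
        v = wordComp ψ u ∧
        wordComp φ (wordComp ψ u) = u ∧
        (∀ z ∈ Set.Icc (u - δ₀ / 8) (u + δ₀ / 8),
          deriv (wordComp φ ∘ wordComp ψ) z < μ) ∧
        wordComp ψ (wordComp φ v) = v ∧
        wordComp ψ '' Set.Icc (u - δ₀ / 8) (u + δ₀ / 8) ⊆ Set.Icc (x - δ₁) (x + δ₁) ∧
        |x - v| < δ₁ :=
  hyperbolic_fixed_point_near_expansive_point_general G hC1 hpos hinv a ε₁ δ₀ hε₁ hε₁a hδ₀pos hmod x
    hx hbdd
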